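/- arXiv:1609.07065 — 2 statements merged into one kernel-verified Lean document; each statement's English description precedes it below -/
import Mathlib

section
/- Let R be a well-typed SRS over a typed signature Σ. Then →_R is terminating if and only if there is no infinite →_R-reduction consisting of well-typed strings. -/
namespace CycleRewriting

/-- A binary relation is terminating if there is no infinite reduction sequence. -/
def Terminating {beta : Type*} (r : beta → beta → Prop) : Prop :=
  ¬ ∃ f : ℕ → beta, ∀ n : ℕ, r (f n) (f (n + 1))

/-- `r₁` is terminating relative to `r₂` iff every infinite `r₂`-sequence contains only
finitely many `r₁`-steps. -/
def RelTerminating {beta : Type*} (r₁ r₂ : beta → beta → Prop) : Prop :=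
  ¬ ∃ f : ℕ → beta, (∀ n : ℕ, r₂ (f n) (f (n + 1))) ∧
      {n : ℕ | r₁ (f n) (f (n + 1))}.Infinite

/-- The string rewrite relation of an SRS `R`. -/
def Step {α : Type*} (R : Set (List α × List α)) (x y : List α) : Prop :=
  ∃ u v l r, (l, r) ∈ R ∧ x = u ++ l ++ v ∧ y = u ++ r ++ v

/-- The prefix rewrite relation of an SRS `R`. -/
def PrefixStep {α : Type*} (R : Set (List α × List α)) (x y : List α) : Prop :=
  ∃ l r w, (l, r) ∈ R ∧ x = l ++ w ∧ y = r ++ w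

/-- The rotation equivalence `u ~ v` iff `u = w₁w₂` and `v = w₂w₁`. -/
def Sim {α : Type*} (u v : List α) : Prop :=
  ∃ w₁ w₂, u = w₁ ++ w₂ ∧ v = w₂ ++ w₁

/-- The cycle rewrite relation of an SRS `R` (on representatives of `Sim`-classes):
`[u] ∘→_R [v]` iff there are a rule `(l, r) ∈ R` and `w` with `l ++ w ∈ [u]` and
`r ++ w ∈ [v]`. -/
def CycleStep {α : Type*} (R : Set (List α × List α)) (x y : List α) : Prop :=
  ∃ l r w, (l, r) ∈ R ∧ Sim (l ++ w) x ∧ Sim (r ++ w) y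

/-- The shift relation `↷`: move the first symbol of a string to its end. -/
def Rot {α : Type*} (u v : List α) : Prop :=
  ∃ a w, u = a :: w ∧ v = w ++ [a]

/-- `k`-fold composition of a relation. -/
def RelPow {beta : Type*} (r : beta → beta → Prop) : ℕ → beta → beta → Prop
  | 0 => Eq
  | n + 1 => Relation.Comp r (RelPow r n)

/-- `lenSRS R` is the maximal length of a left-hand side of a rule of `R`. -/
noncomputable def lenSRS {α : Type*} (R : Set (List α × List α)) : ℕ :=
  sSup ((fun p : List α × List α => p.1.length) '' R)

/-- A string is well-typed iff `source aᵢ = target aᵢ₊₁` for all consecutive symbols. -/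
def WTStr {α T : Type*} (source target : α → T) (w : List α) : Prop :=
  List.Chain' (fun a b => source a = target b) w

/-- The source of a string: the source of its last symbol. -/
def strSource {α T : Type*} (source : α → T) (w : List α) : Option T :=
  w.getLast?.map source

/-- The target of a string: the target of its first symbol. -/
def strTarget {α T : Type*} (target : α → T) (w : List α) : Option T :=
  w.head?.map target

/-- An SRS is well-typed if all left-hand sides are nonempty and for every rule `ℓ → r`:
either `r = ε` and `source ℓ = target ℓ`, or `r ≠ ε`, `source ℓ = source r` and
`target ℓ = target r` (with both sides well-typed strings). -/
def WTSRS {α T : Type*} (source target : α → T) (R : Set (List α × List α)) : Prop :=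
  ∀ p ∈ R, p.1 ≠ [] ∧ WTStr source target p.1 ∧ WTStr source target p.2 ∧
    (p.2 = [] → strSource source p.1 = strTarget target p.1) ∧
    (p.2 ≠ [] → strSource source p.1 = strSource source p.2 ∧
                strTarget target p.1 = strTarget target p.2)

/-!
Cut every string into its maximal well-typed factors, i.e. split it at every type clash
(`List.splitBy`). A left-hand side is well-typed, so each redex lies inside a single factor.
A step either rewrites that factor into a well-typed string with the same boundary types and
leaves the other factors alone, or it erases a whole factor, which lowers the number of factors
(its two neighbours may merge). So every step decreases the number of factors, or keeps it and
decreases the multiset of factors in the multiset extension of the well-typed rewrite relation.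
Both orders are well-founded when there is no infinite well-typed reduction.
-/

theorem _root_.List.length_splitBy_append_le {α : Type*} (r : α → α → Bool) (s t : List α) :
    ((s ++ t).splitBy r).length ≤ (s.splitBy r).length + (t.splitBy r).length := by
  by_cases hsep : ∀ x ∈ s.getLast?, ∀ y ∈ t.head?, r x y = false
  · rw [List.splitBy_append hsep, List.length_append]
  push Not at hsep
  obtain ⟨x, hx, y, hy, hxy⟩ := hsep
  obtain ⟨P, G, hP⟩ := (List.eq_nil_or_concat (s.splitBy r)).resolve_left (by rintro h; simp_all)
  obtain ⟨H, Q, hQ⟩ := List.exists_cons_of_ne_nil (l := t.splitBy r) (by rintro h; simp_all)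
  rw [List.concat_eq_append] at hP
  suffices (s ++ t).splitBy r = P ++ (G ++ H) :: Q by simp [this, hP, hQ]
  obtain ⟨rfl, hPn, hPc, hPb⟩ := List.splitBy_eq_iff.1 hP
  obtain ⟨rfl, hQn, hQc, hQb⟩ := List.splitBy_eq_iff.1 hQ
  refine List.splitBy_eq_iff.2 ⟨by simp, by simp_all, fun m hm => ?_,
    by simp_all [List.isChain_append, List.isChain_cons]⟩
  simp only [List.mem_append, List.mem_cons] at hm
  rcases hm with hm | rfl | hm
  · exact hPc m (by simp [hm])
  · exact List.isChain_append.2 ⟨hPc G (by simp), hQc H (by simp), by simp_all⟩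
  · exact hQc m (by simp [hm])

theorem terminating_iff_wellFounded_flip {β : Type*} {r : β → β → Prop} :
    Terminating r ↔ WellFounded (flip r) := by
  simp [Terminating, wellFounded_iff_isEmpty_descending_chain, isEmpty_subtype, flip]

theorem cutExpand_append_cons {β : Type*} {r : β → β → Prop} {P Q : List β} {a' a : β}
    (h : r a' a) : Relation.CutExpand r ↑(P ++ a' :: Q) ↑(P ++ a :: Q) := by
  have e : ∀ c : β, (↑(P ++ c :: Q) : Multiset β) = {c} + ↑(P ++ Q) := fun c => by
    rw [Multiset.singleton_add, Multiset.cons_coe]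
    exact Multiset.coe_eq_coe.2 List.perm_middle
  rw [e, e]
  exact Relation.cutExpand_single_add h _

section Typed

variable {α T : Type*} {source target : α → T}

@[simp] theorem strSource_nil : strSource source ([] : List α) = none := rfl

@[simp] theorem strTarget_nil : strTarget target ([] : List α) = none := rfl

theorem strSource_append (s t : List α) :
    strSource source (s ++ t) = (strSource source t).or (strSource source s) := by
  simp [strSource, List.getLast?_append, Option.map_or]

theorem strTarget_append (s t : List α) :
    strTarget target (s ++ t) = (strTarget target s).or (strTarget target t) := by
  simp [strTarget, List.head?_append, Option.map_or]

theorem exists_strSource_eq_some {s : List α} (hs : s ≠ []) :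
    ∃ σ, strSource source s = some σ :=
  Option.ne_none_iff_exists'.1 (by simpa [strSource] using hs)

theorem exists_strTarget_eq_some {s : List α} (hs : s ≠ []) :
    ∃ τ, strTarget target s = some τ :=
  Option.ne_none_iff_exists'.1 (by simpa [strTarget] using hs)

theorem wtStr_iff_isChain {w : List α} :
    WTStr source target w ↔ w.IsChain fun a b => source a = target b :=
  Iff.rfl

theorem wtStr_append {s t : List α} :
    WTStr source target (s ++ t) ↔ WTStr source target s ∧ WTStr source target t ∧
      ∀ x ∈ strSource source s, ∀ y ∈ strTarget target t, x = y := by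
  simp [wtStr_iff_isChain, List.isChain_append, strSource, strTarget]

theorem wtStr_replace {a l r b : List α} (hr : WTStr source target r)
    (hs : strSource source r = strSource source l) (ht : strTarget target r = strTarget target l)
    (h : WTStr source target (a ++ l ++ b)) :
    WTStr source target (a ++ r ++ b) ∧
      strSource source (a ++ r ++ b) = strSource source (a ++ l ++ b) ∧
      strTarget target (a ++ r ++ b) = strTarget target (a ++ l ++ b) := by
  refine ⟨?_, by simp only [strSource_append, hs], by simp only [strTarget_append, ht]⟩
  simp only [wtStr_append, strSource_append, ht, hs] at h ⊢
  exact ⟨⟨h.1.1, hr, h.1.2.2⟩, h.2⟩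

theorem wtStr_delete {a l b : List α} (hl : l ≠ [])
    (hloop : strSource source l = strTarget target l) (h : WTStr source target (a ++ l ++ b))
    (hne : a ++ b ≠ []) :
    WTStr source target (a ++ b) ∧ strSource source (a ++ b) = strSource source (a ++ l ++ b) ∧
      strTarget target (a ++ b) = strTarget target (a ++ l ++ b) := by
  obtain ⟨τ, hτ⟩ := exists_strTarget_eq_some (target := target) hl
  simp only [wtStr_append, strSource_append, strTarget_append, hloop, hτ, Option.some_or,
    Option.mem_some_iff] at h ⊢
  rcases eq_or_ne a [] with rfl | ha
  · have hb : b ≠ [] := by simpa using hne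
    obtain ⟨σ, hσ⟩ := exists_strSource_eq_some (source := source) hb
    obtain ⟨τ', hτ'⟩ := exists_strTarget_eq_some (target := target) hb
    simp_all
  · obtain ⟨σ, hσ⟩ := exists_strSource_eq_some (source := source) ha
    obtain ⟨τ', hτ'⟩ := exists_strTarget_eq_some (target := target) ha
    cases strSource source b <;> simp_all

variable (source target) in
def Separated (s t : List α) : Prop :=
  ∀ x ∈ strSource source s, ∀ y ∈ strTarget target t, x ≠ y

theorem Separated.congr_left {s s' t : List α} (h : Separated source target s t)
    (hs : strSource source s' = strSource source s) : Separated source target s' t := by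
  rwa [Separated, hs]

theorem Separated.congr_right {s t t' : List α} (h : Separated source target s t)
    (ht : strTarget target t' = strTarget target t) : Separated source target s t' := by
  rwa [Separated, ht]

theorem WTStr.extend_right {F : List α} (hF : WTStr source target F) (v : List α) :
    ∃ b q, v = b ++ q ∧ WTStr source target (F ++ b) ∧ Separated source target (F ++ b) q := by
  induction v generalizing F with
  | nil => exact ⟨[], [], rfl, by simpa, by simp [Separated]⟩
  | cons c v ih =>
    by_cases h : ∀ x ∈ strSource source F, x = target c
    · obtain ⟨b, q, rfl, hb, hq⟩ :=
        ih (wtStr_append.2 ⟨hF, List.isChain_singleton c, by simpa [strTarget] using h⟩)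
      exact ⟨c :: b, q, rfl, by simpa using hb, by simpa using hq⟩
    · push Not at h
      obtain ⟨x, hx, hxc⟩ := h
      rw [Option.mem_def] at hx
      exact ⟨[], c :: v, rfl, by simpa, by simpa [Separated, strTarget, hx] using hxc⟩

theorem WTStr.extend_left {F : List α} (hF : WTStr source target F) (u : List α) :
    ∃ p a, u = p ++ a ∧ WTStr source target (a ++ F) ∧ Separated source target p (a ++ F) := by
  induction u using List.reverseRecOn generalizing F with
  | nil => exact ⟨[], [], rfl, by simpa, by simp [Separated]⟩
  | append_singleton u c ih =>
    by_cases h : ∀ y ∈ strTarget target F, source c = y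
    · obtain ⟨p, a, rfl, ha, hp⟩ :=
        ih (wtStr_append.2 ⟨List.isChain_singleton c, hF, by simpa [strSource] using h⟩)
      exact ⟨p, a ++ [c], by simp, by simpa using ha, by simpa using hp⟩
    · push Not at h
      obtain ⟨y, hy, hcy⟩ := h
      rw [Option.mem_def] at hy
      exact ⟨u ++ [c], [], by simp, by simpa, by simpa [Separated, strSource, hy] using hcy⟩

theorem WTStr.exists_separated_factor {l : List α} (hl : l ≠ []) (hw : WTStr source target l)
    (u v : List α) :
    ∃ p a b q, u = p ++ a ∧ v = b ++ q ∧ WTStr source target (a ++ l ++ b) ∧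
      Separated source target p (a ++ l ++ b) ∧ Separated source target (a ++ l ++ b) q := by
  obtain ⟨p, a, rfl, hal, hp⟩ := hw.extend_left u
  obtain ⟨b, q, rfl, halb, hq⟩ := hal.extend_right v
  refine ⟨p, a, b, q, rfl, rfl, halb, hp.congr_right ?_, hq⟩
  obtain ⟨τ, hτ⟩ := exists_strTarget_eq_some (target := target) (by simp [hl] : a ++ l ≠ [])
  rw [strTarget_append, hτ, Option.some_or]

variable (source target) in
def factors [DecidableEq T] (w : List α) : List (List α) :=
  w.splitBy fun a b => source a = target b

theorem separated_iff [DecidableEq T] {s t : List α} : Separated source target s t ↔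
    ∀ x ∈ s.getLast?, ∀ y ∈ t.head?, decide (source x = target y) = false := by
  simp [Separated, strSource, strTarget]

theorem factors_append_append [DecidableEq T] {p F q : List α} (hF : F ≠ [])
    (hw : WTStr source target F) (hp : Separated source target p F)
    (hq : Separated source target F q) :
    factors source target (p ++ F ++ q) =
      factors source target p ++ F :: factors source target q := by
  rw [separated_iff] at hp hq
  rw [← List.head?_append_of_ne_nil F hF (l₂ := q)] at hp
  rw [factors, List.append_assoc, List.splitBy_append hp, List.splitBy_append hq,
    List.splitBy_of_isChain hF (by simpa [wtStr_iff_isChain] using hw)]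
  rfl

variable (source target) in
def TypedStep (R : Set (List α × List α)) (x y : List α) : Prop :=
  Step R x y ∧ WTStr source target x ∧ WTStr source target y

variable {R : Set (List α × List α)}

theorem lex_factors_of_step [DecidableEq T] (hwt : WTSRS source target R) {x y : List α}
    (h : Step R x y) :
    Prod.Lex (· < ·) (Relation.CutExpand (flip (TypedStep source target R)))
      ((factors source target y).length, (factors source target y : Multiset (List α)))
      ((factors source target x).length, (factors source target x : Multiset (List α))) := by
  obtain ⟨u, v, l, r, hlr, rfl, rfl⟩ := h
  obtain ⟨hl, hwl, hwr, hdel, hkeep⟩ := hwt (l, r) hlr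
  dsimp only at hl hwl hwr hdel hkeep
  obtain ⟨p, a, b, q, rfl, rfl, hF, hp, hq⟩ := hwl.exists_separated_factor hl u v
  rw [show p ++ a ++ l ++ (b ++ q) = p ++ (a ++ l ++ b) ++ q by simp,
    show p ++ a ++ r ++ (b ++ q) = p ++ (a ++ r ++ b) ++ q by simp,
    factors_append_append (by simp [hl]) hF hp hq, Prod.lex_def]
  by_cases hne : a ++ r ++ b = []
  · obtain ⟨rfl, rfl, rfl⟩ : a = [] ∧ r = [] ∧ b = [] := by simpa using hne
    left
    have := List.length_splitBy_append_le (fun x y => decide (source x = target y)) p q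
    simp only [factors, List.append_nil, List.length_append, List.length_cons]
    omega
  obtain ⟨hF', hs, ht⟩ : WTStr source target (a ++ r ++ b) ∧
      strSource source (a ++ r ++ b) = strSource source (a ++ l ++ b) ∧
      strTarget target (a ++ r ++ b) = strTarget target (a ++ l ++ b) := by
    rcases eq_or_ne r [] with rfl | hr
    · simpa using wtStr_delete hl (hdel rfl) hF (by simpa using hne)
    · exact wtStr_replace hwr (hkeep hr).1.symm (hkeep hr).2.symm hF
  rw [factors_append_append hne hF' (hp.congr_right ht) (hq.congr_left hs)]
  exact Or.inr ⟨by simp, cutExpand_append_cons ⟨⟨a, b, l, r, hlr, rfl, rfl⟩, hF, hF'⟩⟩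

end Typed

theorem type_introduction_general {α T : Type*} (source target : α → T)
    (R : Set (List α × List α)) (hwt : WTSRS source target R) :
    Terminating (Step R) ↔
      ¬ ∃ f : ℕ → List α, (∀ n : ℕ, Step R (f n) (f (n + 1))) ∧
          (∀ n : ℕ, WTStr source target (f n)) := by
  classical
  refine ⟨fun hterm ⟨f, hf, _⟩ => hterm ⟨f, hf⟩, fun H => ?_⟩
  have htyped : WellFounded (flip (TypedStep source target R)) :=
    terminating_iff_wellFounded_flip.1 fun ⟨f, hf⟩ => H ⟨f, fun n => (hf n).1, fun n => (hf n).2.1⟩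
  exact terminating_iff_wellFounded_flip.2 (Subrelation.wf (lex_factors_of_step hwt)
    (InvImage.wf _ (wellFounded_lt.prod_lex htyped.cutExpand)))

/-- type introduction for string termination. -/
theorem type_introduction {α T : Type*} [Finite α] (source target : α → T)
    (R : Set (List α × List α)) (hfin : R.Finite) (hwt : WTSRS source target R) :
    Terminating (Step R) ↔
      ¬ ∃ f : ℕ → List α, (∀ n : ℕ, Step R (f n) (f (n + 1))) ∧
          (∀ n : ℕ, WTStr source target (f n)) :=
  type_introduction_general source target R hwt

end CycleRewriting
end

section
/- Let S ⊆ R be SRSs over Σ and let split_rel(S,R) = (S', split(R)), where S' consists of the (splitA) rules arising from rules of S together with the (splitF) rules arising from rules of S. Then S' is string terminating relative to split(R) (i.e., →_{S'} is terminating relative to →_{split(R)}) if and only if S is cycle terminating relative to R (i.e., ∘→_S is terminating relative to ∘→_R). -/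
namespace CycleRewriting

/-- The alphabet of `split R`: the original alphabet `α`, a fresh copy of it, the
fresh symbols `B`, `E`, `W`, `L`, and fresh symbols `R_{i,j}` indexed by a rule and a
position. -/
inductive SplitSym (α : Type*) where
  | ca : α → SplitSym α          -- an original symbol of Σ
  | cbar : α → SplitSym α        -- its barred copy in the fresh copy of Σ
  | symB : SplitSym α
  | symE : SplitSym α
  | symW : SplitSym α
  | symL : SplitSym α
  | rul : List α × List α → ℕ → SplitSym α   -- the symbol R_{i,j} for rule i, split pos. j

open SplitSym in
/-- The transformation `split`. -/
def splitSRS {α : Type*} (R : Set (List α × List α)) :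
    Set (List (SplitSym α) × List (SplitSym α)) :=
  { p | (∃ l r, (l, r) ∈ R ∧ p = (l.map ca, r.map ca)) ∨                      -- splitA
        (∃ a : α, p = ([cbar a, symL], [symL, ca a])) ∨                        -- splitB
        p = ([symW, symL], [symB]) ∨                                          -- splitC
        (∃ l r, (l, r) ∈ R ∧ ∃ j, 1 ≤ j ∧ j < l.length ∧ ∃ a : α,
          p = ([rul (l, r) j, ca a], [cbar a, rul (l, r) j])) ∨               -- splitD
        (∃ l r, (l, r) ∈ R ∧ ∃ j, 1 ≤ j ∧ j < l.length ∧
          p = (symB :: (l.drop j).map ca, [symW, rul (l, r) j])) ∨            -- splitE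
        (∃ l r, (l, r) ∈ R ∧ ∃ j, 1 ≤ j ∧ j < l.length ∧
          p = (rul (l, r) j :: (l.take j).map ca ++ [symE],
               symL :: r.map ca ++ [symE])) }                                 -- splitF

open SplitSym in
/-- The strict rules of `split_rel (S, R)`: the (splitA) and (splitF) rules arising
from rules of `S`. -/
def splitStrict {α : Type*} (S : Set (List α × List α)) :
    Set (List (SplitSym α) × List (SplitSym α)) :=
  { p | (∃ l r, (l, r) ∈ S ∧ p = (l.map ca, r.map ca)) ∨                      -- splitA
        (∃ l r, (l, r) ∈ S ∧ ∃ j, 1 ≤ j ∧ j < l.length ∧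
          p = (rul (l, r) j :: (l.take j).map ca ++ [symE],
               symL :: r.map ca ++ [symE])) }                                 -- splitF

/-!
Relative termination of `r₁` over `r₂` amounts to termination of `r₂* r₁ r₂*`.

Completeness: a cycle step `[ℓ w] → [r w]` is simulated on `B u E` for a representative `u`.
If `ℓ` occurs in `u`, splitA does it. Otherwise `u = ℓ_s w ℓ_p` with `ℓ = ℓ_p ℓ_s`: splitE
removes `ℓ_s` and leaves the marker `R_{i,j}`, which crosses `w` (splitD) up to `ℓ_p E`, where
splitF applies the rule and leaves `L`; `L` crosses back (splitB) and splitC restores `B`.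

Soundness: the separators `B`, `W`, `E` cut a string into blocks whose number never changes,
and every step changes a single block. Decoding a block, with the suffix still owed by its last
marker put in front, turns each step into a cycle step of `R` or into no step, except for a
splitE step on a piece that still holds a marker; that step freezes the block for good. By
pigeonhole one block carries infinitely many strict steps, and its decodings form an infinite
cycle rewrite sequence with infinitely many steps of `S`.
-/

open Relation Filter SplitSym

section RelativeTermination

variable {β γ : Type*} {r₁ r₂ : β → β → Prop}

def RelStep (r₁ r₂ : β → β → Prop) : β → β → Prop :=
  Comp (ReflTransGen r₂) (Comp r₁ (ReflTransGen r₂))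

theorem RelStep.of_reflTransGen {x x' y y' : β} (hx : ReflTransGen r₂ x x')
    (h : RelStep r₁ r₂ x' y') (hy : ReflTransGen r₂ y' y) : RelStep r₁ r₂ x y :=
  let ⟨a, hxa, b, hab, hby⟩ := h
  ⟨a, hx.trans hxa, b, hab, hby.trans hy⟩

theorem RelStep.reflTransGen (h₁₂ : ∀ x y, r₁ x y → r₂ x y) {x y : β}
    (h : RelStep r₁ r₂ x y) : ReflTransGen r₂ x y :=
  let ⟨_, hxa, _, hab, hby⟩ := h
  hxa.trans (.head (h₁₂ _ _ hab) hby)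

theorem exists_relPow_of_reflTransGen {x y : β} (h : ReflTransGen r₂ x y) :
    ∃ n, RelPow r₂ n x y := by
  induction h using ReflTransGen.head_induction_on with
  | refl => exact ⟨0, rfl⟩
  | head hxz _ ih =>
    obtain ⟨n, hn⟩ := ih
    exact ⟨n + 1, _, hxz, hn⟩

theorem not_relTerminating_of_not_terminating (h₁₂ : ∀ x y, r₁ x y → r₂ x y)
    (h : ¬Terminating (RelStep r₁ r₂)) : ¬RelTerminating r₁ r₂ := by
  obtain ⟨g, hg⟩ := not_not.mp h
  -- `(y, m)`: an `r₁`-step leading back to the chain `g` is `m` steps of `r₂` away from `y`;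
  -- each step lowers `m` until that `r₁`-step is taken, so `r₁`-steps recur forever
  let D := {s : β × ℕ // ∃ a b k, RelPow r₂ s.2 s.1 a ∧ r₁ a b ∧ ReflTransGen r₂ b (g k)}
  have hnext (s : D) : ∃ t : D, r₂ s.1.1 t.1.1 ∧ (s.1.2 = t.1.2 + 1 ∨ r₁ s.1.1 t.1.1) := by
    obtain ⟨⟨y, m⟩, a, b, k, hya, hab, hbg⟩ := s
    cases m with
    | zero =>
      obtain ⟨a', hga', b', hab', hbg'⟩ := hg k
      obtain ⟨m', hm'⟩ := exists_relPow_of_reflTransGen (hbg.trans hga')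
      have hyb : r₁ y b := (show y = a from hya) ▸ hab
      exact ⟨⟨(b, m'), a', b', k + 1, hm', hab', hbg'⟩, h₁₂ _ _ hyb, .inr hyb⟩
    | succ m =>
      obtain ⟨y', hyy', hy'a⟩ := hya
      exact ⟨⟨(y', m), a, b, k, hy'a, hab, hbg⟩, hyy', .inl rfl⟩
  choose next hnext using hnext
  obtain ⟨a, hga, b, hab, hbg⟩ := hg 0
  obtain ⟨m, hm⟩ := exists_relPow_of_reflTransGen hga
  let F : ℕ → D := fun n => next^[n] ⟨(g 0, m), a, b, 1, hm, hab, hbg⟩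
  have hF (n : ℕ) : F (n + 1) = next (F n) := Function.iterate_succ_apply' _ _ _
  have hreach (k N : ℕ) (hN : (F N).1.2 = k) : ∃ n ≥ N, r₁ (F n).1.1 (F (n + 1)).1.1 := by
    induction k generalizing N with
    | zero =>
      refine ⟨N, le_rfl, ?_⟩
      rw [hF]
      exact (hnext (F N)).2.resolve_left (by omega)
    | succ k ih =>
      rcases (hnext (F N)).2 with h | h
      · obtain ⟨n, hn, hr⟩ := ih (N + 1) (by rw [hF]; omega)
        exact ⟨n, by omega, hr⟩
      · exact ⟨N, le_rfl, by rwa [hF]⟩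
  refine not_not.mpr ⟨fun n => (F n).1.1, fun n => ?_, ?_⟩
  · beta_reduce
    rw [hF]
    exact (hnext (F n)).1
  · exact Nat.frequently_atTop_iff_infinite.mp
      (frequently_atTop.mpr fun N => hreach _ N rfl)

theorem not_terminating_of_frequently (f : ℕ → β)
    (hstep : ∀ᶠ n in atTop, ReflGen r₂ (f n) (f (n + 1)))
    (hfreq : ∃ᶠ n in atTop, r₁ (f n) (f (n + 1))) : ¬Terminating (RelStep r₁ r₂) := by
  obtain ⟨T, hT⟩ := eventually_atTop.mp hstep
  have hreach {m n : ℕ} (hm : T ≤ m) (hmn : m ≤ n) : ReflTransGen r₂ (f m) (f n) := by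
    induction n, hmn using Nat.le_induction with
    | base => exact .refl
    | succ n hmn ih => exact ih.trans (reflGen_le_reflTransGen _ _ (hT n (hm.trans hmn)))
  set I := fun n => r₁ (f n) (f (n + 1)) ∧ T ≤ n
  have hI : {n | I n}.Infinite :=
    Nat.frequently_atTop_iff_infinite.mp (hfreq.and_eventually (eventually_ge_atTop T))
  refine not_not.mpr ⟨fun k => f (Nat.nth I k), fun k => ⟨_, .refl, _,
    (Nat.nth_mem_of_infinite hI k).1, hreach ?_ (Nat.nth_strictMono hI k.lt_succ_self)⟩⟩
  exact (Nat.nth_mem_of_infinite hI k).2.trans (Nat.le_succ _)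

theorem relTerminating_iff_terminating (h₁₂ : ∀ x y, r₁ x y → r₂ x y) :
    RelTerminating r₁ r₂ ↔ Terminating (RelStep r₁ r₂) := by
  refine ⟨not_imp_not.mp (not_relTerminating_of_not_terminating h₁₂), fun h hrel => ?_⟩
  obtain ⟨f, hf, hinf⟩ := hrel
  exact not_terminating_of_frequently f (.of_forall fun n => .single (hf n))
    (Nat.frequently_atTop_iff_infinite.mpr hinf) h

theorem terminating_of_simulation {T : β → β → Prop} {T' : γ → γ → Prop} (E : β → γ → Prop)
    (hE : ∀ x, ∃ z, E x z) (hsim : ∀ x y z, T x y → E x z → ∃ z', E y z' ∧ T' z z') :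
    Terminating T' → Terminating T := by
  rintro hT' ⟨f, hf⟩
  have hnext (n : ℕ) (z : {z // E (f n) z}) : ∃ z' : {z' // E (f (n + 1)) z'}, T' z z' :=
    let ⟨z', hz', hzz'⟩ := hsim _ _ _ (hf n) z.2
    ⟨⟨z', hz'⟩, hzz'⟩
  choose next hnext using hnext
  let Z : (n : ℕ) → {z // E (f n) z} := fun n => Nat.rec ⟨_, (hE (f 0)).choose_spec⟩ next n
  exact hT' ⟨fun n => (Z n).1, fun n => hnext n (Z n)⟩

end RelativeTermination

section Rotation

variable {α : Type*} {u v w : List α}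

theorem Sim.refl (u : List α) : Sim u u := ⟨u, [], (List.append_nil u).symm, rfl⟩

theorem Sim.symm : Sim u v → Sim v u := fun ⟨a, b, h₁, h₂⟩ => ⟨b, a, h₂, h₁⟩

theorem Sim.trans : Sim u v → Sim v w → Sim u w := by
  rintro ⟨a, b, rfl, rfl⟩ ⟨c, d, h₁, rfl⟩
  rcases List.append_eq_append_iff.mp h₁ with ⟨e, rfl, rfl⟩ | ⟨e, rfl, rfl⟩
  · exact ⟨e, d ++ b, by simp, by simp⟩
  · exact ⟨a ++ c, e, by simp, by simp⟩

theorem cycleStep_mono {S R : Set (List α × List α)} (h : S ⊆ R) {x y : List α} :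
    CycleStep S x y → CycleStep R x y :=
  fun ⟨l, r, w, hm, h₁, h₂⟩ => ⟨l, r, w, h hm, h₁, h₂⟩

theorem cycleStep_of_mem {Q : Set (List α × List α)} {l r : List α} (h : (l, r) ∈ Q)
    (a b : List α) : CycleStep Q (a ++ l ++ b) (a ++ r ++ b) :=
  ⟨l, r, b ++ a, h, ⟨l ++ b, a, by simp, by simp⟩, ⟨r ++ b, a, by simp, by simp⟩⟩

theorem cycleStep_of_mem_wrap {Q : Set (List α × List α)} {l r : List α} (h : (l, r) ∈ Q)
    (j : ℕ) (a : List α) : CycleStep Q (l.drop j ++ a ++ l.take j) (a ++ r) :=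
  ⟨l, r, a, h, ⟨l.take j, l.drop j ++ a, by rw [← List.append_assoc, List.take_append_drop], rfl⟩,
    ⟨r, a, rfl, rfl⟩⟩

end Rotation

section Decoding

variable {α : Type*}

@[simp] def isSeparator : SplitSym α → Bool
  | ca _ => false
  | cbar _ => false
  | symB => true
  | symE => true
  | symW => true
  | symL => false
  | rul _ _ => false

@[simp] def isMarker : SplitSym α → Bool
  | ca _ => false
  | cbar _ => false
  | symB => false
  | symE => false
  | symW => false
  | symL => true
  | rul _ _ => true

@[simp] def decodeSym : SplitSym α → List α
  | ca a => [a]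
  | cbar a => [a]
  | symB => []
  | symE => []
  | symW => []
  | symL => []
  | rul _ _ => []

/-- The suffix `ℓ_s` that splitE removed from the front of the piece when it placed the
marker `R_{i,j}`; the marker `L` owes nothing. -/
@[simp] def owed : SplitSym α → List α
  | rul lr j => lr.1.drop j
  | _ => []

def decode (p : List (SplitSym α)) : List α := p.flatMap decodeSym

def markers (p : List (SplitSym α)) : List (SplitSym α) := p.filter isMarker

/-- The cycle word that a piece between two separators stands for. -/
def toCycle (p : List (SplitSym α)) : List α :=
  ((markers p).getLast?.map owed).getD [] ++ decode p

@[simp] theorem decode_nil : decode ([] : List (SplitSym α)) = [] := rfl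

@[simp] theorem decode_cons (c : SplitSym α) (p : List (SplitSym α)) :
    decode (c :: p) = decodeSym c ++ decode p := rfl

@[simp] theorem decode_append (p q : List (SplitSym α)) :
    decode (p ++ q) = decode p ++ decode q := List.flatMap_append

@[simp] theorem decode_map_ca (l : List α) : decode (l.map ca) = l := by
  induction l <;> simp_all

@[simp] theorem markers_nil : markers ([] : List (SplitSym α)) = [] := rfl

@[simp] theorem markers_cons (c : SplitSym α) (p : List (SplitSym α)) :
    markers (c :: p) = if isMarker c then c :: markers p else markers p :=
  List.filter_cons

@[simp] theorem markers_append (p q : List (SplitSym α)) :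
    markers (p ++ q) = markers p ++ markers q := List.filter_append _ _

@[simp] theorem markers_map_ca (l : List α) : markers (l.map ca) = [] := by
  induction l <;> simp_all

@[simp] theorem decode_take_map_ca (j : ℕ) (l : List α) :
    decode ((l.map ca).take j) = l.take j := by
  rw [← List.map_take, decode_map_ca]

@[simp] theorem decode_drop_map_ca (j : ℕ) (l : List α) :
    decode ((l.map ca).drop j) = l.drop j := by
  rw [← List.map_drop, decode_map_ca]

@[simp] theorem markers_take_map_ca (j : ℕ) (l : List α) : markers ((l.map ca).take j) = [] := by
  rw [← List.map_take, markers_map_ca]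

@[simp] theorem markers_drop_map_ca (j : ℕ) (l : List α) : markers ((l.map ca).drop j) = [] := by
  rw [← List.map_drop, markers_map_ca]

theorem forall_isSeparator_map_ca (l : List α) : ∀ c ∈ l.map ca, isSeparator c = false := by
  simp

theorem toCycle_congr {p q : List (SplitSym α)} (hd : decode p = decode q)
    (hm : markers p = markers q) : toCycle p = toCycle q := by
  rw [toCycle, toCycle, hd, hm]

theorem toCycle_symL_cons (p : List (SplitSym α)) : toCycle (symL :: p) = toCycle p := by
  cases h : (markers p).getLast? <;>
    simp_all [toCycle, List.getLast?_cons, List.getLast?_eq_none_iff]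

theorem toCycle_rul_cons {l r : List α} {j : ℕ} {p : List (SplitSym α)} (hp : markers p = []) :
    toCycle (rul (l, r) j :: p) = toCycle ((l.drop j).map ca ++ p) := by
  simp [toCycle, hp]

end Decoding

section Pieces

variable {α : Type*}

/-- The rules (splitA) and (splitF) of `Q`, inside a piece: splitF applies at the end of a
piece, just before the separator `E`. -/
def StrictPieceStep (Q : Set (List α × List α)) (p q : List (SplitSym α)) : Prop :=
  (∃ l r a b, (l, r) ∈ Q ∧ p = a ++ l.map ca ++ b ∧ q = a ++ r.map ca ++ b) ∨
  (∃ l r j a, (l, r) ∈ Q ∧ p = a ++ rul (l, r) j :: (l.take j).map ca ∧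
    q = a ++ symL :: r.map ca)

def PieceStep (R : Set (List α × List α)) (p q : List (SplitSym α)) : Prop :=
  StrictPieceStep R p q ∨ (decode p = decode q ∧ markers p = markers q)

theorem StrictPieceStep.cycleStep {Q : Set (List α × List α)} {p q : List (SplitSym α)}
    (h : StrictPieceStep Q p q) : CycleStep Q (toCycle p) (toCycle q) := by
  rcases h with ⟨l, r, a, b, hm, rfl, rfl⟩ | ⟨l, r, j, a, hm, rfl, rfl⟩
  · simpa [toCycle] using cycleStep_of_mem hm
      (((markers a ++ markers b).getLast?.map owed).getD [] ++ decode a) (decode b)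
  · simpa [toCycle, List.getLast?_append] using cycleStep_of_mem_wrap hm j (decode a)

theorem PieceStep.reflGen_cycleStep {R : Set (List α × List α)} {p q : List (SplitSym α)}
    (h : PieceStep R p q) : ReflGen (CycleStep R) (toCycle p) (toCycle q) := by
  rcases h with h | ⟨hd, hm⟩
  · exact .single h.cycleStep
  · rw [toCycle_congr hd hm]

theorem PieceStep.markers_eq {R : Set (List α × List α)} {p q : List (SplitSym α)}
    (h : PieceStep R p q) : markers q = markers p ∨
      ∃ ms lr j, markers p = ms ++ [rul lr j] ∧ markers q = ms ++ [symL] := by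
  rcases h with (⟨l, r, a, b, -, rfl, rfl⟩ | ⟨l, r, j, a, -, rfl, rfl⟩) | ⟨-, hm⟩
  · simp
  · exact .inr ⟨markers a, (l, r), j, by simp, by simp⟩
  · exact .inl hm.symm

end Pieces

section Blocks

variable {α : Type*}

abbrev Block (α : Type*) := SplitSym α × List (SplitSym α)

/-- `p₀ s₁ p₁ ⋯ sₖ pₖ`, with separators `sᵢ` and separator-free pieces `pᵢ`, splits into
`(p₀, [(s₁, p₁), …, (sₖ, pₖ)])`. -/
def splitAtSeparators : List (SplitSym α) → List (SplitSym α) × List (Block α)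
  | [] => ([], [])
  | c :: x =>
    if isSeparator c then ([], (c, (splitAtSeparators x).1) :: (splitAtSeparators x).2)
    else (c :: (splitAtSeparators x).1, (splitAtSeparators x).2)

/-- The first piece gets the dummy separator `E`, which no rule of `split R` changes. -/
def blocks (x : List (SplitSym α)) : List (Block α) :=
  (symE, (splitAtSeparators x).1) :: (splitAtSeparators x).2

theorem splitAtSeparators_cons_of_isSeparator {c : SplitSym α} (hc : isSeparator c = true)
    (x : List (SplitSym α)) : splitAtSeparators (c :: x) =
      ([], (c, (splitAtSeparators x).1) :: (splitAtSeparators x).2) := by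
  rw [splitAtSeparators, if_pos hc]

theorem splitAtSeparators_append_of_forall_not_isSeparator {m : List (SplitSym α)}
    (hm : ∀ c ∈ m, isSeparator c = false) (x : List (SplitSym α)) :
    splitAtSeparators (m ++ x) = (m ++ (splitAtSeparators x).1, (splitAtSeparators x).2) := by
  induction m with
  | nil => rfl
  | cons c m ih =>
    simp only [List.mem_cons, forall_eq_or_imp] at hm
    rw [List.cons_append, splitAtSeparators, if_neg (Bool.eq_false_iff.mp hm.1), ih hm.2]
    rfl

/-- The blocks of `u ++ w`: those of `u`, with the first piece of `w` appended to the last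
piece of `u`, followed by the later blocks of `w`. -/
theorem exists_blocks_append (u : List (SplitSym α)) : ∃ a s p, ∀ w,
    blocks (u ++ w) = a ++ (s, p ++ (splitAtSeparators w).1) :: (splitAtSeparators w).2 := by
  induction u with
  | nil => exact ⟨[], symE, [], fun w => rfl⟩
  | cons c u ih =>
    obtain ⟨a, s, p, h⟩ := ih
    cases hc : isSeparator c <;> rcases a with _ | ⟨⟨s₀, p₀⟩, a⟩
    · exact ⟨[], s, c :: p, fun w => by have := h w; simp_all [blocks, splitAtSeparators]⟩
    · exact ⟨(symE, c :: p₀) :: a, s, p, fun w => by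
        have := h w; simp_all [blocks, splitAtSeparators]⟩
    · exact ⟨[(symE, [])], c, p, fun w => by have := h w; simp_all [blocks, splitAtSeparators]⟩
    · exact ⟨(symE, []) :: (c, p₀) :: a, s, p, fun w => by
        have := h w; simp_all [blocks, splitAtSeparators]⟩

def ChangesOneBlock (P : Block α → Block α → Prop) (x y : List (SplitSym α)) : Prop :=
  ∃ a B B' b, blocks x = a ++ B :: b ∧ blocks y = a ++ B' :: b ∧ P B B'

variable {P : Block α → Block α → Prop} {x y : List (SplitSym α)}

theorem changesOneBlock_append_append (u v : List (SplitSym α)) {m m' : List (SplitSym α)}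
    (hm : ∀ c ∈ m, isSeparator c = false) (hm' : ∀ c ∈ m', isSeparator c = false)
    (hP : ∀ s p, P (s, p ++ m ++ (splitAtSeparators v).1) (s, p ++ m' ++ (splitAtSeparators v).1)) :
    ChangesOneBlock P (u ++ m ++ v) (u ++ m' ++ v) := by
  obtain ⟨a, s, p, hu⟩ := exists_blocks_append u
  refine ⟨a, _, _, (splitAtSeparators v).2, ?_, ?_, hP s p⟩
  · rw [List.append_assoc, hu, splitAtSeparators_append_of_forall_not_isSeparator hm]
    simp
  · rw [List.append_assoc, hu, splitAtSeparators_append_of_forall_not_isSeparator hm']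
    simp

theorem changesOneBlock_append_cons_append (u v : List (SplitSym α)) {σ σ' : SplitSym α}
    {m m' : List (SplitSym α)} (hσ : isSeparator σ = true) (hσ' : isSeparator σ' = true)
    (hm : ∀ c ∈ m, isSeparator c = false) (hm' : ∀ c ∈ m', isSeparator c = false)
    (hP : P (σ, m ++ (splitAtSeparators v).1) (σ', m' ++ (splitAtSeparators v).1)) :
    ChangesOneBlock P (u ++ σ :: m ++ v) (u ++ σ' :: m' ++ v) := by
  obtain ⟨a, s, p, hu⟩ := exists_blocks_append u
  refine ⟨a ++ [(s, p)], _, _, (splitAtSeparators v).2, ?_, ?_, hP⟩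
  · rw [List.append_assoc, List.cons_append, hu, splitAtSeparators_cons_of_isSeparator hσ,
      splitAtSeparators_append_of_forall_not_isSeparator hm]
    simp
  · rw [List.append_assoc, List.cons_append, hu, splitAtSeparators_cons_of_isSeparator hσ',
      splitAtSeparators_append_of_forall_not_isSeparator hm']
    simp

theorem changesOneBlock_splitF (u v : List (SplitSym α)) {l r : List α} {j : ℕ}
    (hP : ∀ s p, P (s, p ++ rul (l, r) j :: (l.take j).map ca) (s, p ++ symL :: r.map ca)) :
    ChangesOneBlock P (u ++ (rul (l, r) j :: (l.take j).map ca ++ [symE]) ++ v)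
      (u ++ (symL :: r.map ca ++ [symE]) ++ v) := by
  have := changesOneBlock_append_append (P := P) (m := rul (l, r) j :: (l.take j).map ca)
    (m' := symL :: r.map ca) u (symE :: v)
    (List.forall_mem_cons.mpr ⟨rfl, forall_isSeparator_map_ca _⟩)
    (List.forall_mem_cons.mpr ⟨rfl, forall_isSeparator_map_ca _⟩)
    fun s p => by simpa [splitAtSeparators] using hP s p
  simpa using this

theorem ChangesOneBlock.length_eq (h : ChangesOneBlock P x y) :
    (blocks y).length = (blocks x).length := by
  obtain ⟨a, B, B', b, hx, hy, -⟩ := h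
  simp [hx, hy]

theorem ChangesOneBlock.reflGen_getD (h : ChangesOneBlock P x y) (i : ℕ) (d : Block α) :
    ReflGen P ((blocks x).getD i d) ((blocks y).getD i d) := by
  obtain ⟨a, B, B', b, hx, hy, hP⟩ := h
  rw [hx, hy]
  rcases lt_trichotomy i a.length with hi | rfl | hi
  · simp only [List.getD_eq_getElem?_getD, List.getElem?_append_left hi]
    exact .refl
  · simpa using .single hP
  · obtain ⟨k, rfl⟩ := Nat.exists_eq_add_of_lt hi
    simp only [List.getD_eq_getElem?_getD, List.getElem?_append_right hi.le]
    simp only [add_assoc, Nat.add_sub_cancel_left, List.getElem?_cons_succ]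
    exact .refl

theorem ChangesOneBlock.exists_getD (h : ChangesOneBlock P x y) (d : Block α) :
    ∃ i < (blocks x).length, P ((blocks x).getD i d) ((blocks y).getD i d) := by
  obtain ⟨a, B, B', b, hx, hy, hP⟩ := h
  exact ⟨a.length, by simp [hx], by simpa [hx, hy] using hP⟩

end Blocks

section Soundness

variable {α : Type*}

/-- The effect of a step of `split R` on the block it changes; the last two cases are splitC
and splitE. -/
def BlockStep (R : Set (List α × List α)) (B B' : Block α) : Prop :=
  (B'.1 = B.1 ∧ PieceStep R B.2 B'.2) ∨
  (B.1 = symW ∧ B'.1 = symB ∧ B.2 = symL :: B'.2) ∨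
  (B.1 = symB ∧ B'.1 = symW ∧
    ∃ l r j t, (l, r) ∈ R ∧ B.2 = (l.drop j).map ca ++ t ∧ B'.2 = rul (l, r) j :: t)

theorem changesOneBlock_of_step {R : Set (List α × List α)} {x y : List (SplitSym α)}
    (h : Step (splitSRS R) x y) : ChangesOneBlock (BlockStep R) x y := by
  obtain ⟨u, v, l', r', hm, rfl, rfl⟩ := h
  rcases hm with ⟨l, r, hlr, hp⟩ | ⟨a, hp⟩ | hp | ⟨l, r, hlr, j, -, -, a, hp⟩ |
    ⟨l, r, hlr, j, -, -, hp⟩ | ⟨l, r, hlr, j, -, -, hp⟩ <;>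
    obtain ⟨rfl, rfl⟩ := Prod.ext_iff.mp hp
  · exact changesOneBlock_append_append u v (forall_isSeparator_map_ca l)
      (forall_isSeparator_map_ca r) fun s p =>
      .inl ⟨rfl, .inl (.inl ⟨l, r, p, _, hlr, rfl, rfl⟩)⟩
  · exact changesOneBlock_append_append u v (by simp) (by simp) fun s p =>
      .inl ⟨rfl, .inr ⟨by simp, by simp⟩⟩
  · exact changesOneBlock_append_cons_append (m := [symL]) (m' := []) u v rfl rfl
      (by simp) (by simp)
      (.inr (.inl ⟨rfl, rfl, rfl⟩))
  · exact changesOneBlock_append_append u v (by simp) (by simp) fun s p =>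
      .inl ⟨rfl, .inr ⟨by simp, by simp⟩⟩
  · exact changesOneBlock_append_cons_append (m' := [rul (l, r) j]) u v rfl rfl
      (forall_isSeparator_map_ca _) (by simp)
      (.inr (.inr ⟨rfl, rfl, l, r, j, _, hlr, rfl, rfl⟩))
  · exact changesOneBlock_splitF u v fun s p =>
      .inl ⟨rfl, .inl (.inr ⟨l, r, j, p, hlr, rfl, rfl⟩)⟩

theorem changesOneBlock_of_strictStep {S : Set (List α × List α)} {x y : List (SplitSym α)}
    (h : Step (splitStrict S) x y) :
    ChangesOneBlock (fun B B' => StrictPieceStep S B.2 B'.2) x y := by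
  obtain ⟨u, v, l', r', hm, rfl, rfl⟩ := h
  rcases hm with ⟨l, r, hlr, hp⟩ | ⟨l, r, hlr, j, -, -, hp⟩ <;>
    obtain ⟨rfl, rfl⟩ := Prod.ext_iff.mp hp
  · exact changesOneBlock_append_append u v (forall_isSeparator_map_ca l)
      (forall_isSeparator_map_ca r) fun s p => .inl ⟨l, r, p, _, hlr, rfl, rfl⟩
  · exact changesOneBlock_splitF u v fun s p => .inr ⟨l, r, j, p, hlr, rfl, rfl⟩

/-- A block whose piece received a marker from splitE while still holding another one: the
separator `W` could only turn back into `B` through splitC, which needs `L` in front of the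
piece, so the block is stuck there. -/
def Frozen (B : Block α) : Prop :=
  B.1 = symW ∧ ∃ lr j ms, markers B.2 = rul lr j :: ms ∧ ms ≠ []

theorem Frozen.of_reflGen_blockStep {R : Set (List α × List α)} {B B' : Block α}
    (hB : Frozen B) (h : ReflGen (BlockStep R) B B') : Frozen B' := by
  obtain ⟨hW, lr, j, ms, hms, hne⟩ := hB
  rcases h with _ | ⟨hs, hp⟩ | ⟨-, -, hL⟩ | ⟨hB, -⟩
  · exact ⟨hW, lr, j, ms, hms, hne⟩
  · refine ⟨hs.trans hW, ?_⟩
    rcases hp.markers_eq with hm | ⟨ms', lr', j', hm, hm'⟩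
    · exact ⟨lr, j, ms, hm.trans hms, hne⟩
    · rw [hms] at hm
      obtain _ | ⟨m, ms'⟩ := ms'
      · simp_all
      · obtain ⟨rfl, rfl⟩ := List.cons_eq_cons.mp hm
        exact ⟨lr, j, ms' ++ [symL], by simp [hm'], by simp⟩
  · simp [hL] at hms
  · exact absurd (hB.symm.trans hW) (by simp)

theorem BlockStep.reflGen_cycleStep_or_frozen {R : Set (List α × List α)} {B B' : Block α}
    (h : BlockStep R B B') :
    ReflGen (CycleStep R) (toCycle B.2) (toCycle B'.2) ∨ B.1 = symB ∧ Frozen B' := by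
  rcases h with ⟨-, hp⟩ | ⟨-, -, hL⟩ | ⟨hB, hW, l, r, j, t, -, hp, hq⟩
  · exact .inl hp.reflGen_cycleStep
  · rw [hL, toCycle_symL_cons]
    exact .inl .refl
  · by_cases ht : markers t = []
    · rw [hp, hq, toCycle_rul_cons ht]
      exact .inl .refl
    · exact .inr ⟨hB, hW, (l, r), j, markers t, by simp [hq], ht⟩

theorem eventually_reflGen_cycleStep {R : Set (List α × List α)} (B : ℕ → Block α)
    (h : ∀ n, ReflGen (BlockStep R) (B n) (B (n + 1))) :
    ∀ᶠ n in atTop, ReflGen (CycleStep R) (toCycle (B n).2) (toCycle (B (n + 1)).2) := by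
  have hstep (n : ℕ) : ReflGen (CycleStep R) (toCycle (B n).2) (toCycle (B (n + 1)).2) ∨
      (B n).1 = symB ∧ Frozen (B (n + 1)) := by
    obtain heq | hs := (reflGen_iff _ _ _).mp (h n)
    · exact .inl (heq ▸ .refl)
    · exact hs.reflGen_cycleStep_or_frozen
  by_cases hfrozen : ∃ n₀, Frozen (B n₀)
  · obtain ⟨n₀, hn₀⟩ := hfrozen
    have hstays (n : ℕ) (hn : n₀ ≤ n) : Frozen (B n) := by
      induction n, hn using Nat.le_induction with
      | base => exact hn₀
      | succ n _ ih => exact ih.of_reflGen_blockStep (h n)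
    exact eventually_atTop.mpr ⟨n₀, fun n hn => (hstep n).resolve_right fun h' =>
      absurd (h'.1.symm.trans (hstays n hn).1) (by simp)⟩
  · push Not at hfrozen
    exact .of_forall fun n => (hstep n).resolve_right fun h' => hfrozen _ h'.2

theorem relTerminating_split_of_terminating_cycle {S R : Set (List α × List α)}
    (h : Terminating (RelStep (CycleStep S) (CycleStep R))) :
    RelTerminating (Step (splitStrict S)) (Step (splitSRS R)) := by
  rintro ⟨f, hf, hinf⟩
  let B (n i : ℕ) : Block α := (blocks (f n)).getD i (symE, [])
  have hlen (n : ℕ) : (blocks (f n)).length = (blocks (f 0)).length := by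
    induction n with
    | zero => rfl
    | succ n ih => rw [(changesOneBlock_of_step (hf n)).length_eq, ih]
  have hstrict : ∃ᶠ n in atTop, ∃ i : Fin (blocks (f 0)).length,
      StrictPieceStep S (B n i).2 (B (n + 1) i).2 := by
    refine (Nat.frequently_atTop_iff_infinite.mpr hinf).mono fun n hn => ?_
    obtain ⟨i, hi, hstep⟩ := (changesOneBlock_of_strictStep hn).exists_getD (symE, [])
    exact ⟨⟨i, hlen n ▸ hi⟩, hstep⟩
  obtain ⟨i, hi⟩ := frequently_exists.mp hstrict
  exact not_terminating_of_frequently (fun n => toCycle (B n i).2)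
    (eventually_reflGen_cycleStep (fun n => B n i)
      fun n => (changesOneBlock_of_step (hf n)).reflGen_getD i _)
    (hi.mono fun n hn => hn.cycleStep) h

end Soundness

section Completeness

variable {α : Type*} {S R : Set (List α × List α)}

theorem step_mono {β : Type*} {Q Q' : Set (List β × List β)} (h : Q ⊆ Q') {x y : List β} :
    Step Q x y → Step Q' x y :=
  fun ⟨u, v, l, r, hm, h₁, h₂⟩ => ⟨u, v, l, r, h hm, h₁, h₂⟩

theorem splitStrict_subset (hSR : S ⊆ R) : splitStrict S ⊆ splitSRS R := by
  rintro p (⟨l, r, hlr, hp⟩ | ⟨l, r, hlr, hj⟩)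
  · exact .inl ⟨l, r, hSR hlr, hp⟩
  · exact .inr (.inr (.inr (.inr (.inr ⟨l, r, hSR hlr, hj⟩))))

def encode (u : List α) : List (SplitSym α) := symB :: u.map ca ++ [symE]

theorem reflTransGen_rul_cross {l r : List α} (hlr : (l, r) ∈ R) {j : ℕ} (hj₁ : 1 ≤ j)
    (hj₂ : j < l.length) (w : List α) (p q : List (SplitSym α)) :
    ReflTransGen (Step (splitSRS R)) (p ++ rul (l, r) j :: (w.map ca ++ q))
      (p ++ w.map cbar ++ rul (l, r) j :: q) := by
  induction w generalizing p with
  | nil => simp [ReflTransGen.refl]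
  | cons a w ih =>
    refine .head ⟨p, w.map ca ++ q, _, _,
      .inr (.inr (.inr (.inl ⟨l, r, hlr, j, hj₁, hj₂, a, rfl⟩))), by simp, rfl⟩ ?_
    simpa using ih (p ++ [cbar a])

theorem reflTransGen_symL_cross (w : List α) (p q : List (SplitSym α)) :
    ReflTransGen (Step (splitSRS R)) (p ++ w.map cbar ++ symL :: q)
      (p ++ symL :: (w.map ca ++ q)) := by
  induction w generalizing p with
  | nil => simp [ReflTransGen.refl]
  | cons a w ih =>
    refine .tail (b := p ++ cbar a :: symL :: (w.map ca ++ q)) (by simpa using ih (p ++ [cbar a]))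
      ⟨p, w.map ca ++ q, _, _, .inr (.inl ⟨a, rfl⟩), by simp, by simp⟩

theorem relStep_encode_of_mem {l r : List α} (hlr : (l, r) ∈ S) (u v : List α) :
    RelStep (Step (splitStrict S)) (Step (splitSRS R)) (encode (u ++ l ++ v))
      (encode (u ++ r ++ v)) :=
  ⟨_, .refl, _, ⟨symB :: u.map ca, v.map ca ++ [symE], _, _, .inl ⟨l, r, hlr, rfl⟩,
    by simp [encode], by simp [encode]⟩, .refl⟩

theorem relStep_encode_of_mem_wrap (hSR : S ⊆ R) {l r : List α} (hlr : (l, r) ∈ S) {j : ℕ}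
    (hj₁ : 1 ≤ j) (hj₂ : j < l.length) (w : List α) :
    RelStep (Step (splitStrict S)) (Step (splitSRS R)) (encode (l.drop j ++ w ++ l.take j))
      (encode (w ++ r)) := by
  refine ⟨symW :: w.map cbar ++ rul (l, r) j :: ((l.take j).map ca ++ [symE]), ?_,
    symW :: w.map cbar ++ symL :: (r.map ca ++ [symE]), ?_, ?_⟩
  · refine .head ⟨[], w.map ca ++ (l.take j).map ca ++ [symE], _, _,
      .inr (.inr (.inr (.inr (.inl ⟨l, r, hSR hlr, j, hj₁, hj₂, rfl⟩)))), by simp [encode],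
      rfl⟩ ?_
    simpa using reflTransGen_rul_cross (hSR hlr) hj₁ hj₂ w [symW] ((l.take j).map ca ++ [symE])
  · exact ⟨symW :: w.map cbar, [], _, _, .inr ⟨l, r, hlr, j, hj₁, hj₂, rfl⟩, by simp, by simp⟩
  · refine .tail (by simpa using reflTransGen_symL_cross w [symW] (r.map ca ++ [symE]))
      ⟨[], w.map ca ++ (r.map ca ++ [symE]), _, _, .inr (.inr (.inl rfl)), rfl, by simp [encode]⟩

theorem exists_sim_relStep_encode (hSR : S ⊆ R) {l r w z : List α} (hlr : (l, r) ∈ S)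
    (hz : Sim (l ++ w) z) : ∃ z', Sim (r ++ w) z' ∧
      RelStep (Step (splitStrict S)) (Step (splitSRS R)) (encode z) (encode z') := by
  obtain ⟨w₁, w₂, h, rfl⟩ := hz
  rcases List.append_eq_append_iff.mp h with ⟨a, rfl, rfl⟩ | ⟨c, rfl, rfl⟩
  · exact ⟨w₂ ++ r ++ a, ⟨r ++ a, w₂, by simp, by simp⟩, by
      simpa using relStep_encode_of_mem hlr w₂ a⟩
  · obtain rfl | hw₁ := eq_or_ne w₁ []
    · exact ⟨r ++ w, .refl _, by simpa using relStep_encode_of_mem hlr [] w⟩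
    obtain rfl | hc := eq_or_ne c []
    · exact ⟨w ++ r, ⟨r, w, rfl, rfl⟩, by simpa using relStep_encode_of_mem hlr w []⟩
    refine ⟨w ++ r, ⟨r, w, rfl, rfl⟩, ?_⟩
    have := relStep_encode_of_mem_wrap hSR hlr (j := w₁.length)
      (List.length_pos_iff.mpr hw₁) (by simpa using List.length_pos_iff.mpr hc) w
    simpa using this

theorem CycleStep.exists_sim_relStep (hSR : S ⊆ R) {x y z : List α} (h : CycleStep S x y)
    (hz : Sim x z) : ∃ z', Sim y z' ∧
      RelStep (Step (splitStrict S)) (Step (splitSRS R)) (encode z) (encode z') :=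
  let ⟨_, _, _, hlr, h₁, h₂⟩ := h
  let ⟨z', hz', hstep⟩ := exists_sim_relStep_encode hSR hlr (h₁.trans hz)
  ⟨z', h₂.symm.trans hz', hstep⟩

theorem exists_sim_reflTransGen_encode {x y z : List α} (h : ReflTransGen (CycleStep R) x y)
    (hz : Sim x z) : ∃ z', Sim y z' ∧ ReflTransGen (Step (splitSRS R)) (encode z) (encode z') := by
  induction h with
  | refl => exact ⟨z, hz, .refl⟩
  | tail _ hstep ih =>
    obtain ⟨z₁, hz₁, h₁⟩ := ih
    obtain ⟨z₂, hz₂, h₂⟩ := hstep.exists_sim_relStep subset_rfl hz₁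
    exact ⟨z₂, hz₂, h₁.trans (h₂.reflTransGen fun _ _ => step_mono (splitStrict_subset le_rfl))⟩

theorem terminating_cycle_of_relTerminating_split (hSR : S ⊆ R)
    (h : RelTerminating (Step (splitStrict S)) (Step (splitSRS R))) :
    Terminating (RelStep (CycleStep S) (CycleStep R)) := by
  rw [relTerminating_iff_terminating fun _ _ => step_mono (splitStrict_subset hSR)] at h
  refine terminating_of_simulation (fun x z' => ∃ z, Sim x z ∧ encode z = z')
    (fun x => ⟨_, x, .refl x, rfl⟩) ?_ h
  rintro x y _ ⟨a, hxa, b, hab, hby⟩ ⟨z, hz, rfl⟩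
  obtain ⟨z₁, hz₁, h₁⟩ := exists_sim_reflTransGen_encode hxa hz
  obtain ⟨z₂, hz₂, h₂⟩ := hab.exists_sim_relStep hSR hz₁
  obtain ⟨z₃, hz₃, h₃⟩ := exists_sim_reflTransGen_encode hby hz₂
  exact ⟨_, ⟨z₃, hz₃, rfl⟩, h₂.of_reflTransGen h₁ h₃⟩

end Completeness

theorem splitRel_sound_and_complete_general {α : Type*} (S R : Set (List α × List α))
    (hSR : S ⊆ R) :
    RelTerminating (Step (splitStrict S)) (Step (splitSRS R)) ↔
      RelTerminating (CycleStep S) (CycleStep R) := by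
  rw [relTerminating_iff_terminating fun _ _ => cycleStep_mono hSR]
  exact ⟨terminating_cycle_of_relTerminating_split hSR, relTerminating_split_of_terminating_cycle⟩

/-- soundness and completeness of `split_rel` for relative termination. -/
theorem splitRel_sound_and_complete {α : Type*} [Finite α] (S R : Set (List α × List α))
    (hSR : S ⊆ R) (hfin : R.Finite) (hne : ∀ p ∈ R, p.1 ≠ []) :
    RelTerminating (Step (splitStrict S)) (Step (splitSRS R)) ↔
      RelTerminating (CycleStep S) (CycleStep R) :=
  splitRel_sound_and_complete_general S R hSR

end CycleRewriting
end
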